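/- arXiv:2107.11221 — 4 statements merged into one kernel-verified Lean document; each statement's English description precedes it below -/
import Mathlib

section
/- Any two non-Archimedean norms on a finite-dimensional vector space over a field with the trivial absolute value admit a joint orthogonal basis; that is, there exists a basis (e_1,…,e_N) of V that is simultaneously orthogonal for both norms. -/
open scoped ENNReal

noncomputable section
attribute [local instance] Classical.propDecidable

/-- An additive non-Archimedean norm on a vector space over a trivially valued field:
`χ : V → ℝ ∪ {+∞}` with `χ v = +∞` iff `v = 0`, invariance under nonzero scalars, and
the ultrametric inequality `χ(v+w) ≥ min (χ v) (χ w)`. -/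
structure NAnorm (k V : Type*) [Field k] [AddCommGroup V] [Module k V] where
  toFun : V → EReal
  ne_bot : ∀ v, toFun v ≠ ⊥
  top_iff : ∀ v, toFun v = ⊤ ↔ v = 0
  smul_eq : ∀ (a : k) (v : V), a ≠ 0 → toFun (a • v) = toFun v
  ultra : ∀ v w, min (toFun v) (toFun w) ≤ toFun (v + w)

namespace NAnorm

variable {k V : Type*} [Field k] [AddCommGroup V] [Module k V]

/-- A basis is `χ`-orthogonal if the norm of any linear combination is the minimum of the
norms of the basis vectors appearing with a nonzero coefficient. -/
def IsOrthogonal {N : ℕ} (χ : NAnorm k V) (b : Module.Basis (Fin N) k V) : Prop :=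
  ∀ a : Fin N → k, χ.toFun (∑ i, a i • b i) = ⨅ i ∈ {i | a i ≠ 0}, χ.toFun (b i)

/-- The real value of the norm (finite on nonzero vectors). -/
noncomputable def val (χ : NAnorm k V) (v : V) : ℝ := (χ.toFun v).toReal

/-- The pointwise minimum of two norms. -/
noncomputable def inf (χ χ' : NAnorm k V) : NAnorm k V where
  toFun v := min (χ.toFun v) (χ'.toFun v)
  ne_bot v h := by
    rcases min_cases (χ.toFun v) (χ'.toFun v) with ⟨h1, _⟩ | ⟨h1, _⟩
    · exact χ.ne_bot v (by rw [← h1]; exact h)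
    · exact χ'.ne_bot v (by rw [← h1]; exact h)
  top_iff v := by
    constructor
    · intro h
      have h1 : (⊤ : EReal) ≤ χ.toFun v := by rw [← h]; exact min_le_left _ _
      exact (χ.top_iff v).1 (le_antisymm le_top h1)
    · intro h
      show min (χ.toFun v) (χ'.toFun v) = ⊤
      rw [(χ.top_iff v).2 h, (χ'.top_iff v).2 h, min_self]
  smul_eq a v ha := by
    show min (χ.toFun (a • v)) (χ'.toFun (a • v)) = min (χ.toFun v) (χ'.toFun v)
    rw [χ.smul_eq a v ha, χ'.smul_eq a v ha]
  ultra v w := by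
    refine le_min ?_ ?_
    · exact le_trans (min_le_min (min_le_left _ _) (min_le_left _ _)) (χ.ultra v w)
    · exact le_trans (min_le_min (min_le_right _ _) (min_le_right _ _)) (χ'.ultra v w)

/-- The Goldman–Iwahori distance `d_∞(χ,χ') = sup_{v ≠ 0} |χ(v) - χ'(v)|`. -/
noncomputable def dInfty (χ χ' : NAnorm k V) : ℝ≥0∞ :=
  ⨆ v : {v : V // v ≠ 0}, ENNReal.ofReal |χ.val v.1 - χ'.val v.1|

/-- The distance `d_p(χ,χ')`, computed from the relative spectrum of `χ,χ'` in a joint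
orthogonal basis. -/
noncomputable def dp (p : ℝ) (χ χ' : NAnorm k V) : ℝ :=
  if h : ∃ b : Module.Basis (Fin (Module.finrank k V)) k V, χ.IsOrthogonal b ∧ χ'.IsOrthogonal b then
    ((Module.finrank k V : ℝ)⁻¹ *
      ∑ j, |χ.val (h.choose j) - χ'.val (h.choose j)| ^ p) ^ (1 / p)
  else 0

/-- The volume of a norm: the mean of its spectrum, computed in an orthogonal basis. -/
noncomputable def vol (χ : NAnorm k V) : ℝ :=
  if h : ∃ b : Module.Basis (Fin (Module.finrank k V)) k V, χ.IsOrthogonal b then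
    (Module.finrank k V : ℝ)⁻¹ * ∑ j, χ.val (h.choose j)
  else 0

end NAnorm

/-! Induction on the dimension. Pick `v ≠ 0` maximising `χ` and let `G` be the subspace of
vectors whose `χ'`-value exceeds `χ' v`. Since `G` misses the line `k v`, it extends to a
complement `U` of that line. Maximality of `χ v` makes `k v ⊕ U` a `χ`-orthogonal sum, and
`G ≤ U` makes it a `χ'`-orthogonal sum, so a joint orthogonal basis of `U` extended by `v` is
a joint orthogonal basis of `V`. -/

theorem Module.Basis.exists_coe_eq_fin_cons_of_isCompl {k V : Type*} [Field k] [AddCommGroup V]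
    [Module k V] {n : ℕ} {v : V} (hv : v ≠ 0) {U : Submodule k V}
    (hU : IsCompl (Submodule.span k {v}) U) (b' : Module.Basis (Fin n) k U) :
    ∃ b : Module.Basis (Fin (n + 1)) k V, ⇑b = Fin.cons v (fun j => (b' j : V)) := by
  have hli : ∀ c : k, ∀ x ∈ U, c • v + x = 0 → c = 0 := by
    intro c x hx hcx
    have hcv : c • v ∈ U := by
      rw [eq_neg_of_add_eq_zero_left hcx]
      exact U.neg_mem hx
    have := Submodule.disjoint_def.1 hU.disjoint _
      (Submodule.smul_mem _ c (Submodule.mem_span_singleton_self v)) hcv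
    simpa [hv] using this
  have hsp : ∀ z : V, ∃ c : k, z + c • v ∈ U := by
    intro z
    obtain ⟨y, hy, u, hu, rfl⟩ := Submodule.mem_sup.1
      (hU.codisjoint.eq_top.symm ▸ Submodule.mem_top : z ∈ Submodule.span k {v} ⊔ U)
    obtain ⟨c, rfl⟩ := Submodule.mem_span_singleton.1 hy
    exact ⟨-c, by simpa [add_comm] using hu⟩
  exact ⟨Module.Basis.mkFinCons v b' hli hsp, Module.Basis.coe_mkFinCons _ _ _ _⟩

namespace NAnorm

variable {k V : Type*} [Field k] [AddCommGroup V] [Module k V] (χ : NAnorm k V)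

theorem toFun_zero : χ.toFun 0 = ⊤ := (χ.top_iff 0).2 rfl

theorem toFun_ne_top {v : V} (hv : v ≠ 0) : χ.toFun v ≠ ⊤ := fun h => hv ((χ.top_iff v).1 h)

theorem toFun_neg (v : V) : χ.toFun (-v) = χ.toFun v := by
  simpa using χ.smul_eq (-1) v (by norm_num)

theorem toFun_smul (a : k) (v : V) : χ.toFun (a • v) = ⨅ _ : a ≠ 0, χ.toFun v := by
  rcases eq_or_ne a 0 with rfl | ha
  · simp [toFun_zero]
  · simp [χ.smul_eq a v ha, ha]

theorem toFun_eq_of_mem_span_singleton {v x : V} (hx : x ∈ Submodule.span k {v}) (hx0 : x ≠ 0) :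
    χ.toFun x = χ.toFun v := by
  obtain ⟨a, rfl⟩ := Submodule.mem_span_singleton.1 hx
  exact χ.smul_eq a v (left_ne_zero_of_smul hx0)

theorem toFun_add_le_left_of_lt {v w : V} (h : χ.toFun v < χ.toFun w) :
    χ.toFun (v + w) ≤ χ.toFun v := by
  by_contra! hlt
  have := χ.ultra (v + w) (-w)
  rw [add_neg_cancel_right, toFun_neg] at this
  exact (lt_min hlt h).not_ge this

theorem toFun_add_eq_min {v w : V} (h : χ.toFun v = χ.toFun w → χ.toFun (v + w) ≤ χ.toFun v) :
    χ.toFun (v + w) = min (χ.toFun v) (χ.toFun w) := by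
  refine le_antisymm ?_ (χ.ultra v w)
  rcases lt_trichotomy (χ.toFun v) (χ.toFun w) with hlt | heq | hgt
  · exact (χ.toFun_add_le_left_of_lt hlt).trans_eq (min_eq_left hlt.le).symm
  · exact (h heq).trans_eq (by rw [heq, min_self])
  · rw [add_comm, min_comm, min_eq_left hgt.le]
    exact χ.toFun_add_le_left_of_lt hgt

def superlevel (t : EReal) : Submodule k V where
  carrier := {v | t ≤ χ.toFun v}
  zero_mem' := by simp [toFun_zero]
  add_mem' ha hb := (le_min ha hb).trans (χ.ultra _ _)
  smul_mem' c v hv := by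
    rcases eq_or_ne c 0 with rfl | hc
    · simp [toFun_zero]
    · simpa [χ.smul_eq c v hc] using hv

def strictSuperlevel (t : EReal) (ht : t ≠ ⊤) : Submodule k V where
  carrier := {v | t < χ.toFun v}
  zero_mem' := by simpa [toFun_zero, lt_top_iff_ne_top]
  add_mem' ha hb := (lt_min ha hb).trans_le (χ.ultra _ _)
  smul_mem' c v hv := by
    rcases eq_or_ne c 0 with rfl | hc
    · simpa [toFun_zero, lt_top_iff_ne_top]
    · simpa [χ.smul_eq c v hc] using hv

/-- Subspaces satisfy the descending chain condition, so some superlevel set `χ.superlevel (χ v)`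
is minimal; its `v` maximises `χ`. -/
theorem exists_maximizer [FiniteDimensional k V] [Nontrivial V] :
    ∃ v : V, v ≠ 0 ∧ ∀ w : V, w ≠ 0 → χ.toFun w ≤ χ.toFun v := by
  obtain ⟨v₀, hv₀⟩ := exists_ne (0 : V)
  obtain ⟨_, ⟨v, hv, rfl⟩, hmin⟩ := IsArtinian.set_has_minimal
    ((fun v : V => χ.superlevel (χ.toFun v)) '' {v | v ≠ 0}) ⟨_, ⟨v₀, hv₀, rfl⟩⟩
  refine ⟨v, hv, fun w hw => ?_⟩
  by_contra! hlt
  refine hmin _ ⟨w, hw, rfl⟩ (lt_of_le_of_ne (fun x hx => hlt.le.trans hx) fun he => ?_)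
  have hv_mem : v ∈ χ.superlevel (χ.toFun w) := by
    rw [show χ.superlevel (χ.toFun w) = χ.superlevel (χ.toFun v) from he]
    exact le_refl (χ.toFun v)
  exact hlt.not_ge hv_mem

def restrict (W : Submodule k V) : NAnorm k W where
  toFun w := χ.toFun w
  ne_bot w := χ.ne_bot w
  top_iff w := (χ.top_iff w).trans Submodule.coe_eq_zero
  smul_eq a w ha := χ.smul_eq a w ha
  ultra v w := χ.ultra v w

def Splits (L U : Submodule k V) : Prop :=
  ∀ x ∈ L, ∀ u ∈ U, χ.toFun (x + u) = min (χ.toFun x) (χ.toFun u)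

theorem splits_of_disjoint {L U : Submodule k V} (hLU : Disjoint L U)
    (h : ∀ x ∈ L, ∀ u ∈ U, x ≠ 0 → x + u ≠ 0 → χ.toFun x = χ.toFun u →
      χ.toFun (x + u) ≤ χ.toFun x) :
    χ.Splits L U := by
  intro x hx u hu
  refine χ.toFun_add_eq_min fun heq => ?_
  rcases eq_or_ne x 0 with rfl | hx0
  · rw [zero_add, heq]
  refine h x hx u hu hx0 (fun hxu => hx0 ?_) heq
  refine Submodule.disjoint_def.1 hLU x hx ?_
  rw [eq_neg_of_add_eq_zero_left hxu]
  exact U.neg_mem hu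

theorem splits_of_forall_le {v : V} {U : Submodule k V}
    (hmax : ∀ w : V, w ≠ 0 → χ.toFun w ≤ χ.toFun v) (hU : Disjoint (Submodule.span k {v}) U) :
    χ.Splits (Submodule.span k {v}) U :=
  χ.splits_of_disjoint hU fun _ hx _ _ hx0 hxu _ =>
    (hmax _ hxu).trans_eq (χ.toFun_eq_of_mem_span_singleton hx hx0).symm

theorem splits_of_strictSuperlevel_le {v : V} (hv : v ≠ 0) {U : Submodule k V}
    (hU : Disjoint (Submodule.span k {v}) U)
    (hGU : χ.strictSuperlevel (χ.toFun v) (χ.toFun_ne_top hv) ≤ U) :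
    χ.Splits (Submodule.span k {v}) U := by
  refine χ.splits_of_disjoint hU fun x hx u hu hx0 _ heq => ?_
  by_contra! hlt
  have hxv := χ.toFun_eq_of_mem_span_singleton hx hx0
  have hxu : x + u ∈ U := hGU (show χ.toFun v < χ.toFun (x + u) by rwa [← hxv])
  have hxU : x ∈ U := by simpa using U.sub_mem hxu hu
  exact hx0 (Submodule.disjoint_def.1 hU x hx hxU)

theorem exists_joint_splitting [FiniteDimensional k V] [Nontrivial V] (χ' : NAnorm k V) :
    ∃ v : V, v ≠ 0 ∧ ∃ U : Submodule k V, IsCompl (Submodule.span k {v}) U ∧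
      χ.Splits (Submodule.span k {v}) U ∧ χ'.Splits (Submodule.span k {v}) U := by
  obtain ⟨v, hv, hmax⟩ := χ.exists_maximizer
  set G := χ'.strictSuperlevel (χ'.toFun v) (χ'.toFun_ne_top hv)
  have hGv : Disjoint G (Submodule.span k {v}) := by
    refine Submodule.disjoint_def.2 fun x hxG hxv => ?_
    by_contra hx0
    exact (hxG : χ'.toFun v < χ'.toFun x).ne (χ'.toFun_eq_of_mem_span_singleton hxv hx0).symm
  obtain ⟨U, hGU, hU⟩ := hGv.exists_isCompl
  exact ⟨v, hv, U, hU.symm, χ.splits_of_forall_le hmax hU.symm.disjoint,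
    χ'.splits_of_strictSuperlevel_le hv hU.symm.disjoint hGU⟩

theorem isOrthogonal_of_fin_zero (b : Module.Basis (Fin 0) k V) : χ.IsOrthogonal b := by
  intro a
  simp [toFun_zero, iInf_of_empty]

theorem isOrthogonal_cons {n : ℕ} {v : V} {U : Submodule k V}
    (hχ : χ.Splits (Submodule.span k {v}) U) {b' : Module.Basis (Fin n) k U}
    (hb' : (χ.restrict U).IsOrthogonal b') (b : Module.Basis (Fin (n + 1)) k V)
    (hb : ⇑b = Fin.cons v (fun j => (b' j : V))) :
    χ.IsOrthogonal b := by
  intro a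
  have hsum : ∑ i, a i • b i = a 0 • v + ((∑ j, a j.succ • b' j : U) : V) := by
    simp [Fin.sum_univ_succ, hb]
  have hU : χ.toFun ((∑ j, a j.succ • b' j : U) : V) =
      ⨅ j ∈ {j | a j.succ ≠ 0}, χ.toFun (b' j) := hb' _
  rw [hsum, hχ _ (Submodule.smul_mem _ _ (Submodule.mem_span_singleton_self v)) _
    (Submodule.coe_mem _), hU, ← (finSuccEquiv n).symm.iInf_comp, iInf_option]
  simp [hb, toFun_smul]

end NAnorm

theorem exists_joint_orthogonal_basis_of_finrank_eq {k V : Type*} [Field k] [AddCommGroup V]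
    [Module k V] [FiniteDimensional k V] {n : ℕ} (hn : Module.finrank k V = n)
    (χ χ' : NAnorm k V) :
    ∃ b : Module.Basis (Fin n) k V, χ.IsOrthogonal b ∧ χ'.IsOrthogonal b := by
  induction n generalizing V with
  | zero =>
    let b := Module.finBasisOfFinrankEq k V hn
    exact ⟨b, χ.isOrthogonal_of_fin_zero b, χ'.isOrthogonal_of_fin_zero b⟩
  | succ n ih =>
    have := Module.nontrivial_of_finrank_eq_succ hn
    obtain ⟨v, hv, U, hU, hχ, hχ'⟩ := χ.exists_joint_splitting χ'
    have hrank : Module.finrank k U = n := by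
      have := Submodule.finrank_add_eq_of_isCompl hU
      rw [finrank_span_singleton hv] at this
      omega
    obtain ⟨b', hb'χ, hb'χ'⟩ := ih hrank (χ.restrict U) (χ'.restrict U)
    obtain ⟨b, hb⟩ := Module.Basis.exists_coe_eq_fin_cons_of_isCompl hv hU b'
    exact ⟨b, χ.isOrthogonal_cons hχ hb'χ b hb, χ'.isOrthogonal_cons hχ' hb'χ' b hb⟩

/-- Any two non-Archimedean norms on a finite-dimensional vector space over a
trivially valued field admit a joint orthogonal basis. -/
theorem exists_joint_orthogonal_basis {k V : Type*} [Field k] [AddCommGroup V] [Module k V]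
    [FiniteDimensional k V] (χ χ' : NAnorm k V) :
    ∃ b : Module.Basis (Fin (Module.finrank k V)) k V, χ.IsOrthogonal b ∧ χ'.IsOrthogonal b :=
  exists_joint_orthogonal_basis_of_finrank_eq rfl χ χ'
end
end

section
/- A superadditive, grading-compatible norm χ on a reduced graded k-algebra R is homogeneous (χ(f^d) = d·χ(f) for all f ∈ R, d ∈ ℕ) if and only if the associated graded algebra gr_χ R is reduced. -/
open DirectSum

/-- A (superadditive, grading-compatible, linearly bounded) norm on a graded `k`-algebra
`R = ⊕ R_m`, written additively with values in `ℝ ∪ {+∞}`. -/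
structure GradedNorm (k R : Type*) [Field k] [CommRing R] [Algebra k R]
    (𝒜 : ℕ → Submodule k R) [GradedAlgebra 𝒜] where
  toFun : R → EReal
  ne_bot : ∀ f, toFun f ≠ ⊥
  top_iff : ∀ f, toFun f = ⊤ ↔ f = 0
  smul_eq : ∀ (a : k) (f : R), a ≠ 0 → toFun (a • f) = toFun f
  ultra : ∀ f g, min (toFun f) (toFun g) ≤ toFun (f + g)
  superadd : ∀ f g, toFun f + toFun g ≤ toFun (f * g)
  compat : ∀ f, toFun f = ⨅ m : ℕ, toFun (DirectSum.decompose 𝒜 f m : R)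
  bounded : ∃ C : ℝ, ∀ (m : ℕ), ∀ f ∈ 𝒜 m, f ≠ 0 →
      toFun f ≤ ((C * m : ℝ) : EReal) ∧ ((-(C * m) : ℝ) : EReal) ≤ toFun f

namespace GradedNorm

variable {k R : Type*} [Field k] [CommRing R] [Algebra k R]
  {𝒜 : ℕ → Submodule k R} [GradedAlgebra 𝒜]

/-- The filtration `F^λ R = {f : χ(f) ≥ λ}`. -/
def Fge (χ : GradedNorm k R 𝒜) (lam : ℝ) : AddSubgroup R where
  carrier := {f | (lam : EReal) ≤ χ.toFun f}
  zero_mem' := by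
    have h : χ.toFun 0 = ⊤ := (χ.top_iff 0).2 rfl
    simp only [Set.mem_setOf_eq, h, le_top]
  add_mem' := by
    intro a b ha hb
    exact le_trans (le_min ha hb) (χ.ultra a b)
  neg_mem' := by
    intro a ha
    have h : χ.toFun (-a) = χ.toFun a := by
      simpa [neg_one_smul] using χ.smul_eq (-1 : k) a (neg_ne_zero.mpr one_ne_zero)
    simpa only [Set.mem_setOf_eq, h] using ha

/-- The strict filtration `F^{>λ} R = {f : χ(f) > λ}`. -/
def Fgt (χ : GradedNorm k R 𝒜) (lam : ℝ) : AddSubgroup R where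
  carrier := {f | (lam : EReal) < χ.toFun f}
  zero_mem' := by
    have h : χ.toFun 0 = ⊤ := (χ.top_iff 0).2 rfl
    simp only [Set.mem_setOf_eq, h]
    exact EReal.coe_lt_top lam
  add_mem' := by
    intro a b ha hb
    exact lt_of_lt_of_le (lt_min ha hb) (χ.ultra a b)
  neg_mem' := by
    intro a ha
    have h : χ.toFun (-a) = χ.toFun a := by
      simpa [neg_one_smul] using χ.smul_eq (-1 : k) a (neg_ne_zero.mpr one_ne_zero)
    simpa only [Set.mem_setOf_eq, h] using ha

/-- The degree-`λ` graded piece `F^λ R / F^{>λ} R` of the associated graded algebra. -/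
abbrev piece (χ : GradedNorm k R 𝒜) (lam : ℝ) : Type _ :=
  Fge χ lam ⧸ (Fgt χ lam).addSubgroupOf (Fge χ lam)

/-- The associated graded algebra `gr_χ R` has no (homogeneous) zero divisors: the product of
two nonzero homogeneous classes of degrees `λ` and `μ` is a nonzero class in degree `λ + μ`.
For a graded ring with totally ordered grading this is equivalent to `gr_χ R` being an
integral domain. -/
def GrIsDomain (χ : GradedNorm k R 𝒜) : Prop :=
  ∀ (lam mu : ℝ) (f : Fge χ lam) (g : Fge χ mu)
    (h : (f : R) * (g : R) ∈ Fge χ (lam + mu)),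
    (QuotientAddGroup.mk f : piece χ lam) ≠ 0 →
    (QuotientAddGroup.mk g : piece χ mu) ≠ 0 →
    (QuotientAddGroup.mk (⟨(f : R) * (g : R), h⟩ : Fge χ (lam + mu)) :
      piece χ (lam + mu)) ≠ 0

/-- The associated graded algebra `gr_χ R` is reduced: no nonzero homogeneous class is
nilpotent. For a graded ring with totally ordered grading this is equivalent to `gr_χ R`
being reduced. -/
def GrIsReduced (χ : GradedNorm k R 𝒜) : Prop :=
  ∀ (lam : ℝ) (f : Fge χ lam) (n : ℕ), 1 ≤ n →
    ∀ (h : (f : R) ^ n ∈ Fge χ ((n : ℝ) * lam)),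
    (QuotientAddGroup.mk (⟨(f : R) ^ n, h⟩ : Fge χ ((n : ℝ) * lam)) :
      piece χ ((n : ℝ) * lam)) = 0 →
    (QuotientAddGroup.mk f : piece χ lam) = 0

end GradedNorm

namespace GradedNorm

variable {k R : Type*} [Field k] [CommRing R] [Algebra k R]
  {𝒜 : ℕ → Submodule k R} [GradedAlgebra 𝒜]

lemma mk_eq_zero_iff (χ : GradedNorm k R 𝒜) (lam : ℝ) (f : Fge χ lam) :
    (QuotientAddGroup.mk f : piece χ lam) = 0 ↔ (lam : EReal) < χ.toFun (f : R) := by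
  rw [QuotientAddGroup.eq_zero_iff, AddSubgroup.mem_addSubgroupOf]
  rfl

lemma pow_ge (χ : GradedNorm k R 𝒜) (f : R) (lam : ℝ) (hf : χ.toFun f = (lam : EReal)) :
    ∀ d : ℕ, 1 ≤ d → (((d : ℝ) * lam : ℝ) : EReal) ≤ χ.toFun (f ^ d) := by
  intro d hd
  induction d with
  | zero => omega
  | succ n ih =>
    rcases Nat.eq_zero_or_pos n with hn | hn
    · subst hn; simp [hf]
    · have h1 : (((n : ℝ) + 1) * lam : ℝ) = ((n : ℝ) * lam) + lam := by ring
      have h2 := χ.superadd (f ^ n) f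
      calc ((((n + 1 : ℕ) : ℝ) * lam : ℝ) : EReal)
          = (((n : ℝ) * lam : ℝ) : EReal) + (lam : EReal) := by
            rw [show (((n + 1 : ℕ) : ℝ) * lam : ℝ) = ((n : ℝ) * lam) + lam by push_cast; ring,
              EReal.coe_add]
        _ ≤ χ.toFun (f ^ n) + χ.toFun f := add_le_add (ih hn) (le_of_eq hf.symm)
        _ ≤ χ.toFun (f ^ n * f) := h2
        _ = χ.toFun (f ^ (n + 1)) := by rw [← pow_succ]

end GradedNorm

/-- A superadditive, grading-compatible norm on a reduced graded
`k`-algebra is homogeneous (`χ(f^d) = d·χ(f)` for all `f` and `d ≥ 1`) if and only if the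
associated graded algebra `gr_χ R` is reduced. -/
theorem homogeneous_iff_gr_reduced {k R : Type*} [Field k] [CommRing R] [Algebra k R]
    [Nontrivial R] [IsReduced R] {𝒜 : ℕ → Submodule k R} [GradedAlgebra 𝒜]
    (χ : GradedNorm k R 𝒜) :
    (∀ (f : R) (d : ℕ), 1 ≤ d → χ.toFun (f ^ d) = (d : EReal) * χ.toFun f) ↔
      χ.GrIsReduced := by
  constructor
  · -- homogeneity implies reduced
    intro hom lam f n hn h hzero
    rw [GradedNorm.mk_eq_zero_iff] at hzero ⊢
    have hge : (lam : EReal) ≤ χ.toFun (f : R) := f.2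
    by_contra hcon
    have heq : χ.toFun (f : R) = (lam : EReal) := le_antisymm (not_lt.mp hcon) hge
    have h1 : χ.toFun ((f : R) ^ n) = (n : EReal) * (lam : EReal) := by
      rw [hom (f : R) n hn, heq]
    have h2 : ((((n : ℝ) * lam : ℝ)) : EReal) = (n : EReal) * (lam : EReal) := by
      rw [EReal.coe_mul]; norm_cast
    rw [h1, ← h2] at hzero
    exact lt_irrefl _ hzero
  · -- reduced implies homogeneity
    intro hred f d hd
    have hnb := χ.ne_bot f
    rcases eq_or_ne (χ.toFun f) ⊤ with htop | hfin
    · -- f = 0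
      have hf0 : f = 0 := (χ.top_iff f).1 htop
      have : f ^ d = 0 := by
        rw [hf0]; exact zero_pow (by omega)
      rw [this, (χ.top_iff 0).2 rfl, htop]
      have hdpos : (0 : EReal) < (d : EReal) := by
        exact_mod_cast Nat.pos_of_ne_zero (by omega)
      rw [EReal.mul_top_of_pos hdpos]
    · -- χ f is a real number lam
      obtain ⟨lam, hlam⟩ : ∃ lam : ℝ, χ.toFun f = (lam : EReal) := by
        lift χ.toFun f to ℝ using ⟨hfin, hnb⟩ with x hx
        exact ⟨x, rfl⟩
      have hge := χ.pow_ge f lam hlam d hd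
      have hle : χ.toFun (f ^ d) ≤ ((((d : ℝ) * lam : ℝ)) : EReal) := by
        by_contra hcon
        push_neg at hcon
        have hfmem : f ∈ χ.Fge lam := le_of_eq hlam.symm
        have hpmem : (f : R) ^ d ∈ χ.Fge ((d : ℝ) * lam) := le_of_lt hcon
        have := hred lam ⟨f, hfmem⟩ d hd hpmem
          (by rw [GradedNorm.mk_eq_zero_iff]; exact hcon)
        rw [GradedNorm.mk_eq_zero_iff] at this
        simp only [hlam] at this
        exact lt_irrefl _ this
      have : χ.toFun (f ^ d) = ((((d : ℝ) * lam : ℝ)) : EReal) := le_antisymm hle hge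
      rw [this, hlam, EReal.coe_mul]
      norm_cast
end

section
/- Let σ be a probability measure supported on [0, T] with T > 0 such that f(λ) := σ([λ,∞))^{1/n} is concave on [0,T) and f(0)=1. Then for every p ∈ [1,∞), ∫ λ^p dσ(λ) ≥ T^p · p!n!/(n+p)! (with p!n!/(n+p)! interpreted via the Beta function for non-integer p). Consequently T ≤ \binom{n+p}{n}^{1/p} (∫ λ^p dσ)^{1/p}. -/
/-!
Concavity of `f = σ([λ,∞))^{1/n}` with `f 0 = 1` and `f ≥ 0` puts `f` above the chord
`λ ↦ 1 - λ/T`, so `σ([λ,∞)) ≥ (1 - λ/T)^n` on `[0,T)`. By the layer-cake formula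
`∫ λ^p dσ = p ∫₀^∞ λ^{p-1} σ([λ,∞)) dλ ≥ p ∫₀^T λ^{p-1} (1 - λ/T)^n dλ`, and the substitution
`λ = T u` turns the right side into `T^p p B(p, n+1) = T^p Γ(p+1)Γ(n+1)/Γ(n+p+1)`.
Taking `p`-th roots gives the bound on `T`.
-/

open MeasureTheory Set Filter Topology

theorem integral_rpow_mul_one_sub_pow {p : ℝ} (hp : 0 < p) (n : ℕ) :
    ∫ x in (0 : ℝ)..1, x ^ (p - 1) * (1 - x) ^ n =
      Real.Gamma p * Real.Gamma (n + 1) / Real.Gamma (p + (n + 1)) := by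
  apply Complex.ofReal_injective
  have hbeta := Complex.betaIntegral_eq_Gamma_mul_div p (n + 1) (by simpa) (by simp; positivity)
  push_cast [← Complex.Gamma_ofReal]
  rw [← hbeta, Complex.betaIntegral, ← intervalIntegral.integral_ofReal]
  refine intervalIntegral.integral_congr fun x hx => ?_
  rw [uIcc_of_le zero_le_one] at hx
  push_cast [Complex.ofReal_cpow hx.1, add_sub_cancel_right, Complex.cpow_natCast]
  rfl

theorem mul_integral_rpow_mul_one_sub_div_pow {p T : ℝ} (hp : 0 < p) (hT : 0 < T) (n : ℕ) :
    p * ∫ t in (0 : ℝ)..T, t ^ (p - 1) * (1 - t / T) ^ n =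
      T ^ p * (Real.Gamma (p + 1) * Real.Gamma (n + 1) / Real.Gamma (n + p + 1)) := by
  have hscale : EqOn (fun t => t ^ (p - 1) * (1 - t / T) ^ n)
      (fun t => T ^ (p - 1) * ((t / T) ^ (p - 1) * (1 - t / T) ^ n)) (uIcc 0 T) := by
    intro t ht
    rw [uIcc_of_le hT.le] at ht
    simp only [Real.div_rpow ht.1 hT.le, ← mul_assoc,
      mul_div_cancel₀ _ (Real.rpow_pos_of_pos hT _).ne']
  rw [intervalIntegral.integral_congr hscale, intervalIntegral.integral_const_mul,
    intervalIntegral.integral_comp_div (fun u => u ^ (p - 1) * (1 - u) ^ n) hT.ne', zero_div,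
    div_self hT.ne', integral_rpow_mul_one_sub_pow hp, Real.Gamma_add_one hp.ne',
    Real.rpow_sub_one hT.ne', smul_eq_mul, show p + (n + 1 : ℝ) = n + p + 1 by ring]
  field_simp

theorem ConcaveOn.one_sub_div_le {f : ℝ → ℝ} {T : ℝ} (hf : ConcaveOn ℝ (Ico 0 T) f)
    (hf0 : f 0 = 1) (hf_nonneg : ∀ x ∈ Ico 0 T, 0 ≤ f x) {t : ℝ} (ht : t ∈ Ico 0 T) :
    1 - t / T ≤ f t := by
  -- `f` lies above its chord from `(0, 1)` to `(s, f s)`, `f s ≥ 0`, for every `s < T`.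
  have hchord : ∀ s ∈ Ioo t T, 1 - t / s ≤ f t := by
    rintro s ⟨hts, hsT⟩
    have hs : 0 < s := ht.1.trans_lt hts
    have hs_mem : s ∈ Ico 0 T := ⟨hs.le, hsT⟩
    have hconv := hf.2 ⟨le_rfl, ht.1.trans_lt ht.2⟩ hs_mem
      (sub_nonneg.2 ((div_le_one hs).2 hts.le)) (div_nonneg ht.1 hs.le) (sub_add_cancel 1 (t / s))
    simp only [smul_eq_mul, mul_zero, zero_add, div_mul_cancel₀ t hs.ne', hf0, mul_one] at hconv
    nlinarith [hf_nonneg s hs_mem, div_nonneg ht.1 hs.le]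
  have hlim : Tendsto (fun s => 1 - t / s) (𝓝[<] T) (𝓝 (1 - t / T)) :=
    tendsto_nhdsWithin_of_tendsto_nhds
      ((continuousAt_const.sub (continuousAt_const.div continuousAt_id
        (ht.1.trans_lt ht.2).ne')).tendsto)
  exact le_of_tendsto hlim (eventually_of_mem (Ioo_mem_nhdsLT ht.2) hchord)

theorem ofReal_one_sub_div_pow_le_measure_Ici {σ : Measure ℝ} [IsFiniteMeasure σ] {n : ℕ}
    (hn : n ≠ 0) {T : ℝ}
    (hconc : ConcaveOn ℝ (Ico 0 T) fun t => (σ (Ici t)).toReal ^ (n : ℝ)⁻¹)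
    (hf0 : (σ (Ici 0)).toReal ^ (n : ℝ)⁻¹ = 1) {t : ℝ} (ht : t ∈ Ico 0 T) :
    ENNReal.ofReal ((1 - t / T) ^ n) ≤ σ (Ici t) := by
  have hroot := hconc.one_sub_div_le hf0 (fun x _ => by positivity) ht
  rw [← ENNReal.ofReal_toReal (measure_ne_top σ _),
    ← Real.rpow_inv_natCast_pow ENNReal.toReal_nonneg hn]
  exact ENNReal.ofReal_le_ofReal (pow_le_pow_left₀
    (sub_nonneg.2 ((div_le_one (ht.1.trans_lt ht.2)).2 ht.2.le)) hroot n)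

theorem ofReal_mul_setLIntegral_le_lintegral_rpow {μ : Measure ℝ} (hμ : ∀ᵐ x ∂μ, 0 ≤ x)
    {p T : ℝ} (hp : 0 < p) {g : ℝ → ℝ}
    (hg : ∀ t ∈ Ioo 0 T, ENNReal.ofReal (g t) ≤ μ (Ici t)) :
    ENNReal.ofReal p * ∫⁻ t in Ioo 0 T, ENNReal.ofReal (t ^ (p - 1) * g t) ≤
      ∫⁻ x, ENNReal.ofReal (x ^ p) ∂μ := by
  rw [lintegral_rpow_eq_lintegral_meas_le_mul μ hμ aemeasurable_id hp]
  gcongr ENNReal.ofReal p * ?_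
  refine (setLIntegral_mono' measurableSet_Ioo fun t ht => ?_).trans
    (lintegral_mono_set Ioo_subset_Ioi_self)
  rw [ENNReal.ofReal_mul (Real.rpow_nonneg ht.1.le _), mul_comm]
  exact mul_le_mul_left (hg t ht) _

theorem mul_integral_le_integral_rpow {μ : Measure ℝ} [IsFiniteMeasure μ] {p T : ℝ}
    (hμ : ∀ᵐ x ∂μ, x ∈ Icc 0 T) (hT : 0 ≤ T) (hp : 0 < p) {g : ℝ → ℝ}
    (hg_int : IntervalIntegrable (fun t => t ^ (p - 1) * g t) volume 0 T)
    (hg_nonneg : ∀ t ∈ Ioo 0 T, 0 ≤ g t)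
    (hg : ∀ t ∈ Ioo 0 T, ENNReal.ofReal (g t) ≤ μ (Ici t)) :
    p * ∫ t in (0 : ℝ)..T, t ^ (p - 1) * g t ≤ ∫ x, x ^ p ∂μ := by
  have hμ_nonneg : ∀ᵐ x ∂μ, 0 ≤ x ^ p := hμ.mono fun x hx => Real.rpow_nonneg hx.1 p
  have hμ_int : Integrable (fun x => x ^ p) μ :=
    .of_bound (Real.continuous_rpow_const hp.le).aestronglyMeasurable (T ^ p)
      (hμ.mono fun x hx => by
        rw [Real.norm_of_nonneg (Real.rpow_nonneg hx.1 p)]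
        exact Real.rpow_le_rpow hx.1 hx.2 hp.le)
  have hg_int' : IntegrableOn (fun t => t ^ (p - 1) * g t) (Ioo 0 T) :=
    ((intervalIntegrable_iff_integrableOn_Ioc_of_le hT).1 hg_int).mono_set Ioo_subset_Ioc_self
  rw [← ENNReal.ofReal_le_ofReal_iff (integral_nonneg_of_ae hμ_nonneg),
    ofReal_integral_eq_lintegral_ofReal hμ_int hμ_nonneg, intervalIntegral.integral_of_le hT,
    integral_Ioc_eq_integral_Ioo, ENNReal.ofReal_mul hp.le,
    ofReal_integral_eq_lintegral_ofReal hg_int'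
      (ae_restrict_of_forall_mem measurableSet_Ioo fun t ht =>
        mul_nonneg (Real.rpow_nonneg ht.1.le _) (hg_nonneg t ht))]
  exact ofReal_mul_setLIntegral_le_lintegral_rpow (hμ.mono fun x hx => hx.1) hp hg

theorem le_inv_rpow_mul_rpow_of_rpow_mul_le {T C M p : ℝ} (hT : 0 ≤ T) (hC : 0 < C)
    (hp : 0 < p) (h : T ^ p * C ≤ M) : T ≤ C⁻¹ ^ (1 / p) * M ^ (1 / p) := by
  have hM : 0 ≤ M := (by positivity : 0 ≤ T ^ p * C).trans h
  rw [← Real.mul_rpow (inv_nonneg.2 hC.le) hM, one_div,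
    Real.le_rpow_inv_iff_of_pos hT (by positivity) hp, inv_mul_eq_div, le_div_iff₀ hC]
  exact h

/-- Let `σ` be a probability measure supported on `[0,T]`, `T > 0`, such that
`f(λ) := σ([λ,∞))^{1/n}` is concave on `[0,T)` and `f(0) = 1`. Then for every `p ∈ [1,∞)`,
`∫ λ^p dσ ≥ T^p · Γ(p+1)Γ(n+1)/Γ(n+p+1)`, and consequently
`T ≤ binom(n+p,n)^{1/p} (∫ λ^p dσ)^{1/p}` (binomial coefficient via the Gamma function). -/
theorem spectral_measure_moment_bound (n : ℕ) (hn : 1 ≤ n)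
    (σ : Measure ℝ) [IsProbabilityMeasure σ] (T : ℝ) (hT : 0 < T)
    (hsupp : σ (Set.Icc 0 T)ᶜ = 0)
    (hconc : ConcaveOn ℝ (Set.Ico 0 T)
      (fun lam : ℝ => (σ (Set.Ici lam)).toReal ^ ((n : ℝ)⁻¹)))
    (hf0 : (σ (Set.Ici (0:ℝ))).toReal ^ ((n : ℝ)⁻¹) = 1)
    (p : ℝ) (hp : 1 ≤ p) :
    T ^ p * (Real.Gamma (p + 1) * Real.Gamma ((n : ℝ) + 1) / Real.Gamma ((n : ℝ) + p + 1))
        ≤ ∫ x, x ^ p ∂σ ∧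
    T ≤ (Real.Gamma ((n : ℝ) + p + 1) / (Real.Gamma ((n : ℝ) + 1) * Real.Gamma (p + 1)))
          ^ (1 / p) * (∫ x, x ^ p ∂σ) ^ (1 / p) := by
  have hp0 : 0 < p := by linarith
  have hmoment : T ^ p * (Real.Gamma (p + 1) * Real.Gamma (n + 1) / Real.Gamma (n + p + 1)) ≤
      ∫ x, x ^ p ∂σ := by
    rw [← mul_integral_rpow_mul_one_sub_div_pow hp0 hT n]
    refine mul_integral_le_integral_rpow (mem_ae_iff.2 hsupp) hT.le hp0
      ((intervalIntegral.intervalIntegrable_rpow' (by linarith)).mul_continuousOn (by fun_prop))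
      (fun t ht => pow_nonneg (sub_nonneg.2 ((div_le_one hT).2 ht.2.le)) n)
      fun t ht =>
        ofReal_one_sub_div_pow_le_measure_Ici (by omega) hconc hf0 (Ioo_subset_Ico_self ht)
  refine ⟨hmoment, ?_⟩
  rw [mul_comm (Real.Gamma _), ← inv_div]
  exact le_inv_rpow_mul_rpow_of_rpow_mul_le hT.le (by positivity) hp0 hmoment
end

section
/- On ℙ^1 with the polarization O(1), consider the concave function g(α) = min{α, c} on P = [0,1] for a constant c ∈ [0,1]. Its Legendre-type transform is g^∨(ξ) = max{ξ + c, cξ + c, 0} for ξ ∈ ℝ. Consequently g^∨ is piecewise affine with rational slopes and rational constants if and only if c ∈ ℚ. -/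
lemma toric_sup_eq (c ξ : ℝ) (hc0 : 0 ≤ c) (hc1 : c ≤ 1) :
    (⨆ α : Set.Icc (0:ℝ) 1, ((α : ℝ) * ξ + min (α : ℝ) c)) =
      max (max (ξ + c) (c * ξ + c)) 0 := by
  set M := max (max (ξ + c) (c * ξ + c)) 0 with hM
  have hub : ∀ α : Set.Icc (0:ℝ) 1, (α : ℝ) * ξ + min (α : ℝ) c ≤ M := by
    rintro ⟨α, hα0, hα1⟩
    dsimp
    rcases le_total α c with h | h
    · rw [min_eq_left h]
      rcases le_or_gt 0 (ξ + 1) with hξ | hξ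
      · refine le_trans ?_ (le_max_of_le_left (le_max_right _ _))
        nlinarith
      · refine le_trans ?_ (le_max_right _ _)
        nlinarith
    · rw [min_eq_right h]
      rcases le_or_gt 0 ξ with hξ | hξ
      · refine le_trans ?_ (le_max_of_le_left (le_max_left _ _))
        nlinarith
      · refine le_trans ?_ (le_max_of_le_left (le_max_right _ _))
        nlinarith
  have hbdd : BddAbove (Set.range fun α : Set.Icc (0:ℝ) 1 =>
      (α : ℝ) * ξ + min (α : ℝ) c) := ⟨M, by rintro _ ⟨α, rfl⟩; exact hub α⟩
  apply le_antisymm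
  · exact ciSup_le hub
  · apply max_le
    · apply max_le
      · have := le_ciSup hbdd (⟨1, by norm_num⟩ : Set.Icc (0:ℝ) 1)
        simpa [min_eq_right hc1] using this
      · have := le_ciSup hbdd (⟨c, hc0, hc1⟩ : Set.Icc (0:ℝ) 1)
        simpa using this
    · have := le_ciSup hbdd (⟨0, by norm_num⟩ : Set.Icc (0:ℝ) 1)
      simpa [min_eq_left hc0] using this

/-- On `ℙ¹` with `O(1)`: for `c ∈ [0,1]` and `g(α) = min(α,c)` on
`P = [0,1]`, the Legendre-type transform is `g^∨(ξ) = max{ξ+c, cξ+c, 0}`; it is a finite max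
of affine functions with rational slopes and rational constants iff `c ∈ ℚ`. -/
theorem toric_example_P1 (c : ℝ) (hc : c ∈ Set.Icc (0:ℝ) 1) :
    (∀ ξ : ℝ,
      (⨆ α : Set.Icc (0:ℝ) 1, ((α : ℝ) * ξ + min (α : ℝ) c)) =
        max (max (ξ + c) (c * ξ + c)) 0) ∧
    ((∃ (m : ℕ) (_ : 0 < m) (a b : Fin m → ℚ),
        ∀ ξ : ℝ,
          (⨆ α : Set.Icc (0:ℝ) 1, ((α : ℝ) * ξ + min (α : ℝ) c)) =
            ⨆ i : Fin m, ((a i : ℝ) * ξ + (b i : ℝ))) ↔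
      ∃ q : ℚ, (q : ℝ) = c) := by
  obtain ⟨hc0, hc1⟩ := hc
  have key := fun ξ => toric_sup_eq c ξ hc0 hc1
  refine ⟨key, ?_, ?_⟩
  · rintro ⟨m, hm, a, b, hab⟩
    -- evaluate at ξ = 0 : c = ⨆ i, b i, a finite max of rationals
    have h0 := (key 0).symm.trans (hab 0)
    simp only [mul_zero, zero_mul, zero_add, max_self] at h0
    rw [max_eq_left hc0] at h0
    have : Nonempty (Fin m) := ⟨⟨0, hm⟩⟩
    obtain ⟨i, hi⟩ := Finite.exists_max (fun i : Fin m => ((b i : ℝ)))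
    have hsup : (⨆ j : Fin m, ((b j : ℝ))) = (b i : ℝ) := by
      apply le_antisymm
      · exact ciSup_le fun j => hi j
      · exact le_ciSup (Set.finite_range fun j : Fin m => ((b j : ℝ))).bddAbove i
    exact ⟨b i, by rw [h0, hsup]⟩
  · rintro ⟨q, rfl⟩
    refine ⟨3, by norm_num, ![1, q, 0], ![q, q, 0], fun ξ => ?_⟩
    rw [key ξ]
    have hbdd : BddAbove (Set.range fun i : Fin 3 =>
        ((![1, q, 0] i : ℝ) * ξ + (![q, q, 0] i : ℝ))) :=
      (Set.finite_range _).bddAbove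
    apply le_antisymm
    · apply max_le
      · apply max_le
        · have := le_ciSup hbdd 0
          simpa using this
        · have := le_ciSup hbdd 1
          simpa using this
      · have := le_ciSup hbdd 2
        simpa using this
    · apply ciSup_le
      intro i
      fin_cases i
      · simp [le_max_of_le_left (le_max_left _ _)]
      · simp [le_max_of_le_left (le_max_right _ _)]
      · simp [le_max_right]
end
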